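/- arXiv:1802.02035 — 2 statements merged into one kernel-verified Lean document; each statement's English description precedes it below -/
import Mathlib

section
/- Let (Ω, μ) be a measure space with μ(Ω) < ∞. Let p : Ω → ℝ be a measurable prior density with p ≥ 0 and ∫_Ω p dμ = 1. Let L, L_N : Ω → ℝ be measurable likelihood functions and suppose there are constants 0 < A ≤ B with A ≤ L(x) ≤ B and A ≤ L_N(x) ≤ B for all N and all x ∈ Ω. Define the normalization constants γ = ∫_Ω L p dμ and γ_N = ∫_Ω L_N p dμ, and the posterior densities f = L·p/γ and f_N = L_N·p/γ_N. Suppose there are a constant C > 0 and a sequence (Q_N) with Q_N → 0 such that sup_{x ∈ Ω} |L_N(x) − L(x)| ≤ C·Q_N for every N. Then there exists a constant K > 0, independent of N, such that for every N, D_KL(f ‖ f_N) = ∫_Ω f log(f/f_N) dμ ≤ K·Q_N². In particular, the Kullback–Leibler divergence converges to zero with twice the convergence rate of the likelihood approximation. -/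
/-!
Writing `f = L p / γ` and `f' = M p / γ'`, we have `log (f / f') = log (L / M) + log (γ' / γ)`.
Bounding both logarithms by `log t ≤ t - 1`, the linear terms integrate to zero and what is left is
the `χ²`-type quantity `∫ (L - M)² / M · p / γ`. A uniform bound `|L - M| ≤ a` with `L, M ≥ A`
makes this at most `(a / A)²`, so the divergence is quadratic in the likelihood error.
-/

open Filter MeasureTheory Real

noncomputable def posterior {Ω : Type*} [MeasurableSpace Ω] (μ : Measure Ω) (p L : Ω → ℝ) : Ω → ℝ :=
  fun x => L x * p x / ∫ y, L y * p y ∂μ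

lemma mul_log_posterior_ratio_le {l m q γ γ' : ℝ} (hl : 0 < l) (hm : 0 < m) (hq : 0 ≤ q)
    (hγ : 0 < γ) (hγ' : 0 < γ') :
    l * q / γ * log (l * q / γ / (m * q / γ')) ≤
      ((l - m) ^ 2 / m * q + (γ' / γ * (l * q) - m * q)) / γ := by
  rcases hq.eq_or_lt with rfl | hq
  · simp
  have hratio : l * q / γ / (m * q / γ') = l / m * (γ' / γ) := by
    field_simp
  rw [hratio, log_mul (by positivity) (by positivity), mul_add]
  calc l * q / γ * log (l / m) + l * q / γ * log (γ' / γ)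
      ≤ l * q / γ * (l / m - 1) + l * q / γ * (γ' / γ - 1) := by
        gcongr
        · exact log_le_sub_one_of_pos (by positivity)
        · exact log_le_sub_one_of_pos (by positivity)
    _ = ((l - m) ^ 2 / m * q + (γ' / γ * (l * q) - m * q)) / γ := by
        field_simp
        ring

lemma sq_sub_div_le {l m a A : ℝ} (hA : 0 < A) (hm : A ≤ m) (hlm : |l - m| ≤ a) :
    (l - m) ^ 2 / m ≤ a ^ 2 / A :=
  div_le_div₀ (sq_nonneg a) (sq_le_sq' (abs_le.1 hlm).1 (abs_le.1 hlm).2) hA hm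

section Density

variable {Ω : Type*} [MeasurableSpace Ω] {μ : Measure Ω} {p : Ω → ℝ}

lemma integrable_mul_density_of_abs_le (hp1 : ∫ x, p x ∂μ = 1) {g : Ω → ℝ} (hg : Measurable g)
    {c : ℝ} (hgc : ∀ x, |g x| ≤ c) : Integrable (fun x => g x * p x) μ :=
  (Integrable.of_integral_ne_zero (by simp [hp1])).bdd_mul hg.aestronglyMeasurable
    (ae_of_all _ hgc)

lemma integral_mul_density_le (hp : ∀ x, 0 ≤ p x) (hp1 : ∫ x, p x ∂μ = 1) {g : Ω → ℝ}
    (hg : Integrable (fun x => g x * p x) μ) {c : ℝ} (hgc : ∀ x, g x ≤ c) :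
    ∫ x, g x * p x ∂μ ≤ c := by
  have hpi : Integrable p μ := .of_integral_ne_zero (by simp [hp1])
  calc ∫ x, g x * p x ∂μ ≤ ∫ x, c * p x ∂μ :=
        integral_mono hg (hpi.const_mul c) fun x => mul_le_mul_of_nonneg_right (hgc x) (hp x)
    _ = c := by rw [integral_const_mul, hp1, mul_one]

lemma le_integral_mul_density (hp : ∀ x, 0 ≤ p x) (hp1 : ∫ x, p x ∂μ = 1) {g : Ω → ℝ}
    (hg : Integrable (fun x => g x * p x) μ) {c : ℝ} (hgc : ∀ x, c ≤ g x) :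
    c ≤ ∫ x, g x * p x ∂μ := by
  have hpi : Integrable p μ := .of_integral_ne_zero (by simp [hp1])
  calc c = ∫ x, c * p x ∂μ := by rw [integral_const_mul, hp1, mul_one]
    _ ≤ ∫ x, g x * p x ∂μ :=
        integral_mono (hpi.const_mul c) hg fun x => mul_le_mul_of_nonneg_right (hgc x) (hp x)

variable {L M : Ω → ℝ}

theorem integral_posterior_mul_log_le (hp : ∀ x, 0 ≤ p x) (hL : ∀ x, 0 < L x) (hM : ∀ x, 0 < M x)
    (hLp : Integrable (fun x => L x * p x) μ) (hMp : Integrable (fun x => M x * p x) μ)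
    (hγ : 0 < ∫ x, L x * p x ∂μ) (hγ' : 0 < ∫ x, M x * p x ∂μ)
    (hχ : Integrable (fun x => (L x - M x) ^ 2 / M x * p x) μ) :
    ∫ x, posterior μ p L x * log (posterior μ p L x / posterior μ p M x) ∂μ ≤
      (∫ x, (L x - M x) ^ 2 / M x * p x ∂μ) / ∫ x, L x * p x ∂μ := by
  set γ := ∫ x, L x * p x ∂μ
  set γ' := ∫ x, M x * p x ∂μ
  have hχ_nonneg : 0 ≤ ∫ x, (L x - M x) ^ 2 / M x * p x ∂μ :=
    integral_nonneg fun x => mul_nonneg (div_nonneg (sq_nonneg _) (hM x).le) (hp x)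
  by_cases hKL : Integrable (fun x => posterior μ p L x *
      log (posterior μ p L x / posterior μ p M x)) μ
  swap
  · rw [integral_undef hKL]
    positivity
  have hlin : Integrable (fun x => γ' / γ * (L x * p x) - M x * p x) μ :=
    (hLp.const_mul _).sub hMp
  calc _ ≤ ∫ x, ((L x - M x) ^ 2 / M x * p x + (γ' / γ * (L x * p x) - M x * p x)) / γ ∂μ :=
        integral_mono hKL ((hχ.add hlin).div_const γ) fun x =>
          mul_log_posterior_ratio_le (hL x) (hM x) (hp x) hγ hγ'
    _ = (∫ x, (L x - M x) ^ 2 / M x * p x ∂μ) / γ := by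
        rw [integral_div, integral_add hχ hlin, integral_sub (hLp.const_mul _) hMp,
          integral_const_mul, div_mul_cancel₀ _ hγ.ne', sub_self, add_zero]

theorem integral_posterior_mul_log_le_sq (hp : ∀ x, 0 ≤ p x) (hp1 : ∫ x, p x ∂μ = 1)
    (hL_meas : Measurable L) (hM_meas : Measurable M) {A B a : ℝ} (hA : 0 < A)
    (hL : ∀ x, A ≤ L x ∧ L x ≤ B) (hM : ∀ x, A ≤ M x ∧ M x ≤ B)
    (hLM : ∀ x, |L x - M x| ≤ a) :
    ∫ x, posterior μ p L x * log (posterior μ p L x / posterior μ p M x) ∂μ ≤ (a / A) ^ 2 := by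
  have hint {g : Ω → ℝ} (hg : Measurable g) (hgAB : ∀ x, A ≤ g x ∧ g x ≤ B) :
      Integrable (fun x => g x * p x) μ :=
    integrable_mul_density_of_abs_le hp1 hg fun x =>
      abs_le.2 ⟨by linarith [hgAB x], (hgAB x).2⟩
  have hγ : A ≤ ∫ x, L x * p x ∂μ :=
    le_integral_mul_density hp hp1 (hint hL_meas hL) fun x => (hL x).1
  have hγ' : A ≤ ∫ x, M x * p x ∂μ :=
    le_integral_mul_density hp hp1 (hint hM_meas hM) fun x => (hM x).1
  have hχ_le (x : Ω) : (L x - M x) ^ 2 / M x ≤ a ^ 2 / A := sq_sub_div_le hA (hM x).1 (hLM x)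
  have hχ_nonneg (x : Ω) : 0 ≤ (L x - M x) ^ 2 / M x :=
    div_nonneg (sq_nonneg _) (hA.trans_le (hM x).1).le
  have hχ : Integrable (fun x => (L x - M x) ^ 2 / M x * p x) μ :=
    integrable_mul_density_of_abs_le hp1 (by fun_prop) fun x =>
      (abs_of_nonneg (hχ_nonneg x)).trans_le (hχ_le x)
  calc _ ≤ (∫ x, (L x - M x) ^ 2 / M x * p x ∂μ) / ∫ x, L x * p x ∂μ :=
        integral_posterior_mul_log_le hp (fun x => hA.trans_le (hL x).1)
          (fun x => hA.trans_le (hM x).1) (hint hL_meas hL) (hint hM_meas hM)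
          (hA.trans_le hγ) (hA.trans_le hγ') hχ
    _ ≤ (a ^ 2 / A) / A :=
        div_le_div₀ (by positivity) (integral_mul_density_le hp hp1 hχ hχ_le) hA hγ
    _ = (a / A) ^ 2 := by ring

end Density

theorem KL_posterior_doubled_rate_general
    {Ω : Type*} [MeasurableSpace Ω] (μ : Measure Ω)
    (p : Ω → ℝ) (hp_nonneg : ∀ x, 0 ≤ p x)
    (hp_int : ∫ x, p x ∂μ = 1)
    (L : Ω → ℝ) (LN : ℕ → Ω → ℝ)
    (hL_meas : Measurable L) (hLN_meas : ∀ N, Measurable (LN N))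
    (A B : ℝ) (hA : 0 < A)
    (hL_bdd : ∀ x, A ≤ L x ∧ L x ≤ B)
    (hLN_bdd : ∀ N x, A ≤ LN N x ∧ LN N x ≤ B)
    (γ : ℝ) (hγ : γ = ∫ x, L x * p x ∂μ)
    (γN : ℕ → ℝ) (hγN : ∀ N, γN N = ∫ x, LN N x * p x ∂μ)
    (f : Ω → ℝ) (hf : ∀ x, f x = L x * p x / γ)
    (fN : ℕ → Ω → ℝ) (hfN : ∀ N x, fN N x = LN N x * p x / γN N)
    (C : ℝ) (hC : 0 < C)
    (Q : ℕ → ℝ)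
    (hbound : ∀ N, ∀ x, |LN N x - L x| ≤ C * Q N) :
    ∃ K > 0, ∀ N, ∫ x, f x * Real.log (f x / fN N x) ∂μ ≤ K * Q N ^ 2 := by
  refine ⟨(C / A) ^ 2, by positivity, fun N => ?_⟩
  have hf_eq : f = posterior μ p L := funext fun x => by rw [hf, hγ, posterior]
  have hfN_eq : fN N = posterior μ p (LN N) := funext fun x => by rw [hfN, hγN, posterior]
  have hLLN (x : Ω) : |L x - LN N x| ≤ C * Q N := abs_sub_comm (LN N x) (L x) ▸ hbound N x
  calc _ ≤ (C * Q N / A) ^ 2 := by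
        rw [hf_eq, hfN_eq]
        exact integral_posterior_mul_log_le_sq hp_nonneg hp_int hL_meas (hLN_meas N) hA hL_bdd
          (hLN_bdd N) hLLN
    _ = (C / A) ^ 2 * Q N ^ 2 := by ring

/-- Doubling of the convergence rate in the Kullback--Leibler divergence:
if the approximate likelihoods `L_N` converge to the true likelihood `L`
uniformly with rate `Q_N`, then the Kullback--Leibler divergence between the
true posterior `f = L·p/γ` and the approximate posterior `f_N = L_N·p/γ_N`
is bounded by `K · Q_N²`. -/
theorem KL_posterior_doubled_rate
    {Ω : Type*} [MeasurableSpace Ω] (μ : Measure Ω) [IsFiniteMeasure μ]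
    (p : Ω → ℝ) (hp_meas : Measurable p) (hp_nonneg : ∀ x, 0 ≤ p x)
    (hp_int : ∫ x, p x ∂μ = 1)
    (L : Ω → ℝ) (LN : ℕ → Ω → ℝ)
    (hL_meas : Measurable L) (hLN_meas : ∀ N, Measurable (LN N))
    (A B : ℝ) (hA : 0 < A) (hAB : A ≤ B)
    (hL_bdd : ∀ x, A ≤ L x ∧ L x ≤ B)
    (hLN_bdd : ∀ N x, A ≤ LN N x ∧ LN N x ≤ B)
    (γ : ℝ) (hγ : γ = ∫ x, L x * p x ∂μ)
    (γN : ℕ → ℝ) (hγN : ∀ N, γN N = ∫ x, LN N x * p x ∂μ)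
    (f : Ω → ℝ) (hf : ∀ x, f x = L x * p x / γ)
    (fN : ℕ → Ω → ℝ) (hfN : ∀ N x, fN N x = LN N x * p x / γN N)
    (C : ℝ) (hC : 0 < C)
    (Q : ℕ → ℝ) (hQ : Tendsto Q atTop (nhds 0))
    (hbound : ∀ N, ∀ x, |LN N x - L x| ≤ C * Q N) :
    ∃ K > 0, ∀ N, ∫ x, f x * Real.log (f x / fN N x) ∂μ ≤ K * Q N ^ 2 :=
  KL_posterior_doubled_rate_general μ p hp_nonneg hp_int L LN hL_meas hLN_meas A B hA hL_bdd hLN_bdd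
    γ hγ γN hγN f hf fN hfN C hC Q hbound
end

section
/- Let θ_0, …, θ_N be points in ℝ^d, let p : ℝ^d → ℝ be strictly positive, let ζ > 0 and M ≥ 0, and for each k = 0, …, N let ρ_k : ℝ^d → ℝ be a weight function with ζ·p(θ) ≤ ρ_k(θ) ≤ (ζ + M)·p(θ) for all θ. For each k let D_k : ℝ^d → ℝ be a function (the Vandermonde determinant θ ↦ det V(θ_0, …, θ_{k−1}, θ)) such that: (i) ρ_k(θ)·|D_k(θ)| ≤ ρ_k(θ_k)·|D_k(θ_k)| for all θ ∈ ℝ^d (θ_k maximizes the weighted determinant with weight ρ_k); and (ii) D_k(θ_j) = 0 for all j < k. Define the single weighting function q : ℝ^d → ℝ by q(θ) = (ζ + M)·p(θ) if θ ∈ {θ_0, …, θ_N} and q(θ) = ζ·p(θ) otherwise. Then for every k = 0, …, N and every θ ∉ {θ_{k+1}, …, θ_N}, q(θ)·|D_k(θ)| ≤ q(θ_k)·|D_k(θ_k)|; that is, the adaptively weighted Leja nodes are also Leja nodes for the single N-independent weighting function q. -/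
open Classical in
/-- The single `N`-independent weighting function `q`: it equals
`(ζ + M) · p θ` on the node set `s` and `ζ · p θ` elsewhere. -/
noncomputable def adaptiveWeight {α : Type*} (p : α → ℝ) (ζ M : ℝ)
    (s : Set α) (t : α) : ℝ :=
  if t ∈ s then (ζ + M) * p t else ζ * p t

/-! Away from the nodes `q = ζ·p ≤ ρ_k`, and at the earlier nodes `D_k` vanishes, so
`q·|D_k| ≤ ρ_k·|D_k|` at every point other than `θ_k` and the later nodes. Maximality of `θ_k`
for `ρ_k` and `ρ_k(θ_k) ≤ (ζ + M)·p(θ_k) = q(θ_k)` then give the claim. -/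

open Set

section AdaptiveWeight

variable {α : Type*} {p : α → ℝ} {ζ M : ℝ} {s : Set α} {t : α}

theorem adaptiveWeight_of_mem (ht : t ∈ s) : adaptiveWeight p ζ M s t = (ζ + M) * p t :=
  if_pos ht

theorem adaptiveWeight_of_notMem (ht : t ∉ s) : adaptiveWeight p ζ M s t = ζ * p t :=
  if_neg ht

theorem adaptiveWeight_range_mul_abs_le {ι : Type*} [LinearOrder ι] {θ : ι → α} {ρ f : α → ℝ}
    {k : ι} (hρ_low : ∀ t, ζ * p t ≤ ρ t) (hzero : ∀ j < k, f (θ j) = 0)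
    (htk : t ≠ θ k) (hlater : ∀ j, k < j → t ≠ θ j) :
    adaptiveWeight p ζ M (range θ) t * |f t| ≤ ρ t * |f t| := by
  by_cases hmem : t ∈ range θ
  · obtain ⟨j, rfl⟩ := hmem
    rcases lt_trichotomy j k with hjk | rfl | hkj
    · simp [hzero j hjk]
    · exact absurd rfl htk
    · exact absurd rfl (hlater j hkj)
  · rw [adaptiveWeight_of_notMem hmem]
    gcongr
    exact hρ_low t

end AdaptiveWeight

theorem adaptive_leja_single_weight_general
    {d N : ℕ} (θ : Fin (N + 1) → (Fin d → ℝ))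
    (p : (Fin d → ℝ) → ℝ)
    (ζ M : ℝ)
    (ρ : Fin (N + 1) → (Fin d → ℝ) → ℝ)
    (hρ_low : ∀ k t, ζ * p t ≤ ρ k t)
    (hρ_high : ∀ k t, ρ k t ≤ (ζ + M) * p t)
    (D : Fin (N + 1) → (Fin d → ℝ) → ℝ)
    (hmax : ∀ k t, ρ k t * |D k t| ≤ ρ k (θ k) * |D k (θ k)|)
    (hzero : ∀ k j : Fin (N + 1), j < k → D k (θ j) = 0) :
    ∀ k : Fin (N + 1), ∀ t, (∀ j : Fin (N + 1), k < j → t ≠ θ j) →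
      adaptiveWeight p ζ M (Set.range θ) t * |D k t|
        ≤ adaptiveWeight p ζ M (Set.range θ) (θ k) * |D k (θ k)| := by
  intro k t hlater
  by_cases htk : t = θ k
  · rw [htk]
  calc adaptiveWeight p ζ M (range θ) t * |D k t| ≤ ρ k t * |D k t| :=
        adaptiveWeight_range_mul_abs_le (hρ_low k) (hzero k) htk hlater
    _ ≤ ρ k (θ k) * |D k (θ k)| := hmax k t
    _ ≤ (ζ + M) * p (θ k) * |D k (θ k)| := by gcongr; exact hρ_high k (θ k)
    _ = adaptiveWeight p ζ M (range θ) (θ k) * |D k (θ k)| := by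
        rw [adaptiveWeight_of_mem (mem_range_self k)]

/-- Adaptively weighted Leja nodes are Leja nodes for a single weighting
function: if each node `θ_k` maximizes `ρ_k(θ)·|D_k(θ)|` for a weight `ρ_k`
sandwiched between `ζ·p` and `(ζ+M)·p`, and the Vandermonde determinant
`D_k` vanishes at the earlier nodes, then for every `k` and every `θ` not
among the later nodes, `q(θ)·|D_k(θ)| ≤ q(θ_k)·|D_k(θ_k)|`, where `q` is the
single weighting function `adaptiveWeight p ζ M {θ_0, …, θ_N}`. -/
theorem adaptive_leja_single_weight
    {d N : ℕ} (θ : Fin (N + 1) → (Fin d → ℝ))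
    (p : (Fin d → ℝ) → ℝ) (hp : ∀ t, 0 < p t)
    (ζ M : ℝ) (hζ : 0 < ζ) (hM : 0 ≤ M)
    (ρ : Fin (N + 1) → (Fin d → ℝ) → ℝ)
    (hρ_low : ∀ k t, ζ * p t ≤ ρ k t)
    (hρ_high : ∀ k t, ρ k t ≤ (ζ + M) * p t)
    (D : Fin (N + 1) → (Fin d → ℝ) → ℝ)
    (hmax : ∀ k t, ρ k t * |D k t| ≤ ρ k (θ k) * |D k (θ k)|)
    (hzero : ∀ k j : Fin (N + 1), j < k → D k (θ j) = 0) :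
    ∀ k : Fin (N + 1), ∀ t, (∀ j : Fin (N + 1), k < j → t ≠ θ j) →
      adaptiveWeight p ζ M (Set.range θ) t * |D k t|
        ≤ adaptiveWeight p ζ M (Set.range θ) (θ k) * |D k (θ k)| :=
  adaptive_leja_single_weight_general θ p ζ M ρ hρ_low hρ_high D hmax hzero
end
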